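/- For every integer m ≥ 1 one has the equality sup{ |{t ∈ [0,∞) : |Λ_m f(t)| ≥ 1}| / ∫₀^∞ |f(t)| dt : f ∈ F_m } = sup over all reals 1 < b ≤ c < d of ( b̂ − 1 + d̂ − c ) / ( m/(2+m) − ((2+m)/m) b + (4(1+m)/(m(2+m))) b^{1+m/2} + ∫_c^d | −(2+m)/m + D t^{m/2} | dt ), where D = (2(1+m)/(m c^{m/2}))·(1 + (b/c)^{1+m/2}(1 − b^{m/2})), b̂ = min( max( b, b·( −1 − (2+m)/m + (2(1+m)/m) b^{m/2} )^{2/(2+m)} ), c ), and d̂ = max( d, d·| −1 − (2+m)/m + D d^{m/2} |^{2/(2+m)} ). -/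
import Mathlib


open MeasureTheory Real Set

/-- The operator `Λ_m`. -/
noncomputable def Lam (m : ℕ) (f : ℝ → ℝ) (t : ℝ) : ℝ :=
  ((1 + (m : ℝ)) / t ^ (1 + (m : ℝ) / 2)) * (∫ s in (0:ℝ)..t, f s * s ^ ((m : ℝ) / 2)) - f t

/-- The coefficient `B = -2(1+m)/(m a^{m/2})`. -/
noncomputable def Bcoef (m : ℕ) (a : ℝ) : ℝ :=
  -(2 * (1 + (m : ℝ))) / ((m : ℝ) * a ^ ((m : ℝ) / 2))

/-- The coefficient `D′` of the class `F_m`. -/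
noncomputable def Dprime (m : ℕ) (a b c : ℝ) : ℝ :=
  2 * (1 + (m : ℝ)) / ((m : ℝ) * c ^ ((m : ℝ) / 2))
    + (2 * (1 + (m : ℝ)) / ((m : ℝ) * c ^ ((m : ℝ) / 2))) * (b / c) ^ (1 + (m : ℝ) / 2)
    + Bcoef m a * (b / c) ^ (1 + (m : ℝ))

/-- The general function of the class `F_m` with parameters `0 < a < b ≤ c < d`. -/
noncomputable def fgen (m : ℕ) (a b c d t : ℝ) : ℝ :=
  if a < t ∧ t ≤ b then (2 + (m : ℝ)) / (m : ℝ) + Bcoef m a * t ^ ((m : ℝ) / 2)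
  else if c < t ∧ t ≤ d then -(2 + (m : ℝ)) / (m : ℝ) + Dprime m a b c * t ^ ((m : ℝ) / 2)
  else 0

/-- The coefficient `D = (2(1+m)/(m c^{m/2}))(1 + (b/c)^{1+m/2}(1 - b^{m/2}))`. -/
noncomputable def D19 (m : ℕ) (b c : ℝ) : ℝ :=
  (2 * (1 + (m : ℝ)) / ((m : ℝ) * c ^ ((m : ℝ) / 2)))
    * (1 + (b / c) ^ (1 + (m : ℝ) / 2) * (1 - b ^ ((m : ℝ) / 2)))

/-- `b̂ = min(max(b, b(-1-(2+m)/m + (2(1+m)/m) b^{m/2})^{2/(2+m)}), c)`. -/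
noncomputable def bhat (m : ℕ) (b c : ℝ) : ℝ :=
  min (max b (b * (-1 - (2 + (m : ℝ)) / (m : ℝ)
    + (2 * (1 + (m : ℝ)) / (m : ℝ)) * b ^ ((m : ℝ) / 2)) ^ (2 / (2 + (m : ℝ))))) c

/-- `d̂ = max(d, d|-1-(2+m)/m + D d^{m/2}|^{2/(2+m)})`. -/
noncomputable def dhat (m : ℕ) (b c d : ℝ) : ℝ :=
  max d (d * |(-1 - (2 + (m : ℝ)) / (m : ℝ)
    + D19 m b c * d ^ ((m : ℝ) / 2))| ^ (2 / (2 + (m : ℝ))))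

/-! ### Auxiliary machinery -/

open intervalIntegral
section Aux

lemma rs1 (m : ℕ) {x : ℝ} (hx : 0 < x) : x ^ (1 + (m:ℝ)/2) = x * x ^ ((m:ℝ)/2) := by
  rw [Real.rpow_add hx, Real.rpow_one]

lemma rs2 (m : ℕ) {x : ℝ} (hx : 0 < x) :
    x ^ ((m:ℝ) + 1) = x * (x ^ ((m:ℝ)/2) * x ^ ((m:ℝ)/2)) := by
  rw [show ((m:ℝ) + 1) = (m:ℝ)/2 + (1 + (m:ℝ)/2) by ring, Real.rpow_add hx, rs1 m hx]; ring

lemma rs3 (m : ℕ) {x : ℝ} (hx : 0 < x) :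
    x ^ (1 + (m:ℝ)) = x * (x ^ ((m:ℝ)/2) * x ^ ((m:ℝ)/2)) := by
  rw [show (1 + (m:ℝ)) = (m:ℝ) + 1 by ring]; exact rs2 m hx

lemma seg_int (m : ℕ) (C B' : ℝ) {u v : ℝ} (hu : 0 < u) (huv : u ≤ v) :
    ∫ s in u..v, (C + B' * s ^ ((m:ℝ)/2)) * s ^ ((m:ℝ)/2)
      = (C * v ^ (1 + (m:ℝ)/2) / (1 + (m:ℝ)/2) + B' * v ^ ((m:ℝ) + 1) / ((m:ℝ) + 1))
        - (C * u ^ (1 + (m:ℝ)/2) / (1 + (m:ℝ)/2) + B' * u ^ ((m:ℝ) + 1) / ((m:ℝ) + 1)) := by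
  have hm2 : (0:ℝ) ≤ (m:ℝ)/2 := by positivity
  have hc1 : Continuous fun s : ℝ => C * s ^ ((m:ℝ)/2) :=
    continuous_const.mul (Real.continuous_rpow_const hm2)
  have hc2 : Continuous fun s : ℝ => B' * s ^ ((m:ℝ):ℝ) :=
    continuous_const.mul (Real.continuous_rpow_const (by positivity))
  have hcong : ∫ s in u..v, (C + B' * s ^ ((m:ℝ)/2)) * s ^ ((m:ℝ)/2)
      = ∫ s in u..v, (C * s ^ ((m:ℝ)/2) + B' * s ^ ((m:ℝ):ℝ)) := by
    apply intervalIntegral.integral_congr_ae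
    filter_upwards with s hs
    rw [Set.uIoc_of_le huv] at hs
    have hs0 : 0 < s := lt_of_le_of_lt hu.le hs.1
    have : s ^ ((m:ℝ):ℝ) = s ^ ((m:ℝ)/2) * s ^ ((m:ℝ)/2) := by
      rw [← Real.rpow_add hs0]; norm_num
    rw [this]; ring
  rw [hcong, intervalIntegral.integral_add (hc1.intervalIntegrable u v)
    (hc2.intervalIntegrable u v)]
  rw [intervalIntegral.integral_const_mul, intervalIntegral.integral_const_mul,
    integral_rpow (Or.inl (by have := Nat.cast_nonneg (α:=ℝ) m; linarith)),
    integral_rpow (Or.inl (by have := Nat.cast_nonneg (α:=ℝ) m; linarith))]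
  rw [show (m:ℝ)/2 + 1 = 1 + (m:ℝ)/2 by ring]
  ring

/-- The two bump profiles. -/
noncomputable def P1 (m : ℕ) (a t : ℝ) : ℝ := (2 + (m:ℝ)) / (m:ℝ) + Bcoef m a * t ^ ((m:ℝ)/2)

noncomputable def P2 (m : ℕ) (a b c t : ℝ) : ℝ :=
  -(2 + (m:ℝ)) / (m:ℝ) + Dprime m a b c * t ^ ((m:ℝ)/2)

/-- Antiderivatives of `P1 t * t^(m/2)` and `P2 t * t^(m/2)`. -/
noncomputable def G1 (m : ℕ) (a t : ℝ) : ℝ :=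
  (2 + (m:ℝ)) / (m:ℝ) * t ^ (1 + (m:ℝ)/2) / (1 + (m:ℝ)/2)
    + Bcoef m a * t ^ ((m:ℝ) + 1) / ((m:ℝ) + 1)

noncomputable def G2 (m : ℕ) (a b c t : ℝ) : ℝ :=
  -(2 + (m:ℝ)) / (m:ℝ) * t ^ (1 + (m:ℝ)/2) / (1 + (m:ℝ)/2)
    + Dprime m a b c * t ^ ((m:ℝ) + 1) / ((m:ℝ) + 1)

section Fval
variable (m : ℕ) (a b c d : ℝ)

lemma fgen_eq_indicator (hbc : b ≤ c) :
    (fun t => fgen m a b c d t)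
      = fun t => (Set.Ioc a b).indicator (fun t => P1 m a t) t
          + (Set.Ioc c d).indicator (fun t => P2 m a b c t) t := by
  funext t
  unfold fgen
  split_ifs with h1 h2
  · rw [Set.indicator_of_mem (by exact ⟨h1.1, h1.2⟩),
      Set.indicator_of_notMem (by intro h; exact absurd h.1 (not_lt.2 (h1.2.trans hbc)))]
    simp [P1]
  · rw [Set.indicator_of_notMem (by intro h; exact h1 ⟨h.1, h.2⟩),
      Set.indicator_of_mem (by exact ⟨h2.1, h2.2⟩)]
    simp [P2]
  · rw [Set.indicator_of_notMem (by intro h; exact h1 ⟨h.1, h.2⟩),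
      Set.indicator_of_notMem (by intro h; exact h2 ⟨h.1, h.2⟩)]
    simp

lemma integrand_integrable (hbc : b ≤ c) (u v : ℝ) :
    IntervalIntegrable (fun s => fgen m a b c d s * s ^ ((m:ℝ)/2)) MeasureTheory.volume u v := by
  have h : (fun s => fgen m a b c d s * s ^ ((m:ℝ)/2))
      = fun s => (Set.Ioc a b).indicator (fun t => P1 m a t * t ^ ((m:ℝ)/2)) s
          + (Set.Ioc c d).indicator (fun t => P2 m a b c t * t ^ ((m:ℝ)/2)) s := by
    funext s
    rw [show fgen m a b c d s = _ from congrFun (fgen_eq_indicator m a b c d hbc) s]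
    by_cases h1 : s ∈ Set.Ioc a b <;> by_cases h2 : s ∈ Set.Ioc c d <;>
      simp [h1, h2, Set.indicator_of_mem, Set.indicator_of_notMem] <;> ring
  rw [h]
  have cont : ∀ K D' : ℝ, Continuous fun t : ℝ => (K + D' * t ^ ((m:ℝ)/2)) * t ^ ((m:ℝ)/2) := by
    intro K D'
    exact (continuous_const.add (continuous_const.mul
      (Real.continuous_rpow_const (by positivity)))).mul
      (Real.continuous_rpow_const (by positivity))
  apply IntervalIntegrable.add
  · apply MeasureTheory.Integrable.intervalIntegrable
    rw [MeasureTheory.integrable_indicator_iff measurableSet_Ioc]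
    exact ((cont _ _).continuousOn.integrableOn_Icc).mono_set Set.Ioc_subset_Icc_self
  · apply MeasureTheory.Integrable.intervalIntegrable
    rw [MeasureTheory.integrable_indicator_iff measurableSet_Ioc]
    exact ((cont _ _).continuousOn.integrableOn_Icc).mono_set Set.Ioc_subset_Icc_self

lemma piece_zero (hab : a < b) (hbc : b ≤ c) (hcd : c < d) {u v : ℝ} (huv : u ≤ v)
    (h : v ≤ a ∨ (b ≤ u ∧ v ≤ c) ∨ d ≤ u) :
    ∫ s in u..v, fgen m a b c d s * s ^ ((m:ℝ)/2) = 0 := by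
  have : ∫ s in u..v, fgen m a b c d s * s ^ ((m:ℝ)/2) = ∫ s in u..v, (0:ℝ) := by
    apply intervalIntegral.integral_congr_ae
    filter_upwards with s hs
    rw [Set.uIoc_of_le huv] at hs
    have h1 : ¬(a < s ∧ s ≤ b) := by
      rcases h with h|h|h
      · exact fun hh => absurd (hs.2.trans h) (not_le.2 hh.1)
      · exact fun hh => absurd (h.1.trans_lt hs.1) (not_lt.2 hh.2)
      · exact fun hh => absurd (lt_of_le_of_lt (hbc.trans hcd.le) (h.trans_lt hs.1))
          (not_lt.2 hh.2)
    have h2 : ¬(c < s ∧ s ≤ d) := by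
      rcases h with h|h|h
      · exact fun hh => absurd ((hs.2.trans h).trans_lt (hab.trans_le hbc)) (not_lt.2 hh.1.le)
      · exact fun hh => absurd (hs.2.trans h.2) (not_le.2 hh.1)
      · exact fun hh => absurd (h.trans_lt hs.1) (not_lt.2 hh.2)
    simp [fgen, h1, h2]
  rw [this, intervalIntegral.integral_zero]

lemma piece_P1 (ha : 0 < a) (hbc : b ≤ c) {u v : ℝ} (hau : a ≤ u) (huv : u ≤ v) (hvb : v ≤ b) :
    ∫ s in u..v, fgen m a b c d s * s ^ ((m:ℝ)/2) = G1 m a v - G1 m a u := by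
  have : ∫ s in u..v, fgen m a b c d s * s ^ ((m:ℝ)/2)
      = ∫ s in u..v, ((2 + (m:ℝ)) / (m:ℝ) + Bcoef m a * s ^ ((m:ℝ)/2)) * s ^ ((m:ℝ)/2) := by
    apply intervalIntegral.integral_congr_ae
    filter_upwards with s hs
    rw [Set.uIoc_of_le huv] at hs
    have h1 : a < s ∧ s ≤ b := ⟨hau.trans_lt hs.1, hs.2.trans hvb⟩
    simp [fgen, h1]
  rw [this, seg_int m _ _ (ha.trans_le hau) huv]
  simp [G1]

lemma piece_P2 (ha : 0 < a) (hab : a < b) (hbc : b ≤ c) {u v : ℝ} (hcu : c ≤ u) (huv : u ≤ v)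
    (hvd : v ≤ d) :
    ∫ s in u..v, fgen m a b c d s * s ^ ((m:ℝ)/2) = G2 m a b c v - G2 m a b c u := by
  have : ∫ s in u..v, fgen m a b c d s * s ^ ((m:ℝ)/2)
      = ∫ s in u..v, (-(2 + (m:ℝ)) / (m:ℝ) + Dprime m a b c * s ^ ((m:ℝ)/2)) * s ^ ((m:ℝ)/2) := by
    apply intervalIntegral.integral_congr_ae
    filter_upwards with s hs
    rw [Set.uIoc_of_le huv] at hs
    have h2 : c < s ∧ s ≤ d := ⟨hcu.trans_lt hs.1, hs.2.trans hvd⟩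
    have h1 : ¬(a < s ∧ s ≤ b) := fun hh => absurd (hbc.trans_lt h2.1) (not_lt.2 hh.2)
    simp [fgen, h1, h2]
  rw [this, seg_int m _ _ (ha.trans_le (hab.le.trans (hbc.trans hcu))) huv]
  simp [G2]

/-- The running integral `F t`. -/
noncomputable def Fv (m : ℕ) (a b c d t : ℝ) : ℝ :=
  ∫ s in (0:ℝ)..t, fgen m a b c d s * s ^ ((m:ℝ)/2)

variable {a b c d}

lemma F_le_a (ha : 0 < a) (hab : a < b) (hbc : b ≤ c) (hcd : c < d) {t : ℝ} (h0 : 0 ≤ t)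
    (h : t ≤ a) : Fv m a b c d t = 0 :=
  piece_zero m a b c d hab hbc hcd h0 (Or.inl h)

lemma F_in_ab (ha : 0 < a) (hab : a < b) (hbc : b ≤ c) (hcd : c < d) {t : ℝ} (h1 : a ≤ t)
    (h2 : t ≤ b) : Fv m a b c d t = G1 m a t - G1 m a a := by
  unfold Fv
  rw [← intervalIntegral.integral_add_adjacent_intervals (b := a)
    (integrand_integrable m a b c d hbc 0 a) (integrand_integrable m a b c d hbc a t),
    piece_zero m a b c d hab hbc hcd ha.le (Or.inl le_rfl),
    piece_P1 m a b c d ha hbc le_rfl h1 h2]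
  ring

lemma F_in_bc (ha : 0 < a) (hab : a < b) (hbc : b ≤ c) (hcd : c < d) {t : ℝ} (h1 : b ≤ t)
    (h2 : t ≤ c) : Fv m a b c d t = G1 m a b - G1 m a a := by
  unfold Fv
  rw [← intervalIntegral.integral_add_adjacent_intervals (b := b)
    (integrand_integrable m a b c d hbc 0 b) (integrand_integrable m a b c d hbc b t),
    piece_zero m a b c d hab hbc hcd h1 (Or.inr (Or.inl ⟨le_rfl, h2⟩))]
  have : (∫ s in (0:ℝ)..b, fgen m a b c d s * s ^ ((m:ℝ)/2)) = G1 m a b - G1 m a a := by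
    rw [← intervalIntegral.integral_add_adjacent_intervals (b := a)
      (integrand_integrable m a b c d hbc 0 a) (integrand_integrable m a b c d hbc a b),
      piece_zero m a b c d hab hbc hcd ha.le (Or.inl le_rfl),
      piece_P1 m a b c d ha hbc le_rfl hab.le le_rfl]
    ring
  rw [this]; ring

lemma F_in_cd (ha : 0 < a) (hab : a < b) (hbc : b ≤ c) (hcd : c < d) {t : ℝ} (h1 : c ≤ t)
    (h2 : t ≤ d) :
    Fv m a b c d t = (G1 m a b - G1 m a a) + (G2 m a b c t - G2 m a b c c) := by
  unfold Fv
  rw [← intervalIntegral.integral_add_adjacent_intervals (b := c)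
    (integrand_integrable m a b c d hbc 0 c) (integrand_integrable m a b c d hbc c t),
    piece_P2 m a b c d ha hab hbc le_rfl h1 h2]
  have : (∫ s in (0:ℝ)..c, fgen m a b c d s * s ^ ((m:ℝ)/2)) = G1 m a b - G1 m a a :=
    F_in_bc m ha hab hbc hcd hbc le_rfl
  rw [this]

lemma F_ge_d (ha : 0 < a) (hab : a < b) (hbc : b ≤ c) (hcd : c < d) {t : ℝ} (h1 : d ≤ t) :
    Fv m a b c d t = (G1 m a b - G1 m a a) + (G2 m a b c d - G2 m a b c c) := by
  unfold Fv
  rw [← intervalIntegral.integral_add_adjacent_intervals (b := d)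
    (integrand_integrable m a b c d hbc 0 d) (integrand_integrable m a b c d hbc d t),
    piece_zero m a b c d hab hbc hcd h1 (Or.inr (Or.inr le_rfl))]
  have : (∫ s in (0:ℝ)..d, fgen m a b c d s * s ^ ((m:ℝ)/2))
      = (G1 m a b - G1 m a a) + (G2 m a b c d - G2 m a b c c) :=
    F_in_cd m ha hab hbc hcd hcd.le le_rfl
  rw [this]; ring

end Fval
end Aux

/-! ### Values of `Lam` on the various regions -/

section LamVal
variable (m : ℕ) {a b c d : ℝ}

lemma alg_ab (hm : 1 ≤ m) (ha : 0 < a) {t : ℝ} (ht : 0 < t) :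
    ((1 + (m:ℝ)) / t ^ (1 + (m:ℝ)/2)) * (G1 m a t - G1 m a a)
      - ((2 + (m:ℝ)) / (m:ℝ) + Bcoef m a * t ^ ((m:ℝ)/2)) = 1 := by
  have hμ : (1:ℝ) ≤ (m:ℝ) := by exact_mod_cast hm
  have hT : (0:ℝ) < t ^ ((m:ℝ)/2) := Real.rpow_pos_of_pos ht _
  have hA : (0:ℝ) < a ^ ((m:ℝ)/2) := Real.rpow_pos_of_pos ha _
  unfold G1 Bcoef
  rw [rs1 m ht, rs2 m ht, rs1 m ha, rs2 m ha]
  set T := t ^ ((m:ℝ)/2)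
  set A := a ^ ((m:ℝ)/2)
  field_simp
  ring

lemma alg_cd (hm : 1 ≤ m) (ha : 0 < a) (hb : 0 < b) (hc : 0 < c) {t : ℝ} (ht : 0 < t) :
    ((1 + (m:ℝ)) / t ^ (1 + (m:ℝ)/2)) * ((G1 m a b - G1 m a a) + (G2 m a b c t - G2 m a b c c))
      - (-(2 + (m:ℝ)) / (m:ℝ) + Dprime m a b c * t ^ ((m:ℝ)/2)) = -1 := by
  have hμ : (1:ℝ) ≤ (m:ℝ) := by exact_mod_cast hm
  have hT : (0:ℝ) < t ^ ((m:ℝ)/2) := Real.rpow_pos_of_pos ht _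
  have hA : (0:ℝ) < a ^ ((m:ℝ)/2) := Real.rpow_pos_of_pos ha _
  have hB : (0:ℝ) < b ^ ((m:ℝ)/2) := Real.rpow_pos_of_pos hb _
  have hC : (0:ℝ) < c ^ ((m:ℝ)/2) := Real.rpow_pos_of_pos hc _
  unfold G1 G2 Dprime Bcoef
  rw [Real.div_rpow hb.le hc.le, Real.div_rpow hb.le hc.le,
    rs1 m ht, rs2 m ht, rs1 m ha, rs2 m ha, rs1 m hb, rs2 m hb, rs1 m hc, rs2 m hc,
    rs3 m hb, rs3 m hc]
  set T := t ^ ((m:ℝ)/2)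
  set A := a ^ ((m:ℝ)/2)
  set Bb := b ^ ((m:ℝ)/2)
  set C := c ^ ((m:ℝ)/2)
  field_simp
  ring

lemma Kb_eq (hm : 1 ≤ m) (ha : 0 < a) (hb : 0 < b) :
    (1 + (m:ℝ)) * (G1 m a b - G1 m a a)
      = -(b ^ (1 + (m:ℝ)/2) * (-1 - (2 + (m:ℝ)) / (m:ℝ)
          + (2 * (1 + (m:ℝ)) / (m:ℝ)) * (b/a) ^ ((m:ℝ)/2))) := by
  have hμ : (1:ℝ) ≤ (m:ℝ) := by exact_mod_cast hm
  have hA : (0:ℝ) < a ^ ((m:ℝ)/2) := Real.rpow_pos_of_pos ha _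
  have hB : (0:ℝ) < b ^ ((m:ℝ)/2) := Real.rpow_pos_of_pos hb _
  unfold G1 Bcoef
  rw [Real.div_rpow hb.le ha.le, rs1 m ha, rs2 m ha, rs1 m hb, rs2 m hb]
  set A := a ^ ((m:ℝ)/2)
  set Bb := b ^ ((m:ℝ)/2)
  field_simp
  ring

lemma Kd_eq (hm : 1 ≤ m) (ha : 0 < a) (hb : 0 < b) (hc : 0 < c) (hd : 0 < d) :
    (1 + (m:ℝ)) * ((G1 m a b - G1 m a a) + (G2 m a b c d - G2 m a b c c))
      = d ^ (1 + (m:ℝ)/2) * (-1 - (2 + (m:ℝ)) / (m:ℝ)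
          + D19 m (b/a) (c/a) * (d/a) ^ ((m:ℝ)/2)) := by
  have hμ : (1:ℝ) ≤ (m:ℝ) := by exact_mod_cast hm
  have hA : (0:ℝ) < a ^ ((m:ℝ)/2) := Real.rpow_pos_of_pos ha _
  have hB : (0:ℝ) < b ^ ((m:ℝ)/2) := Real.rpow_pos_of_pos hb _
  have hC : (0:ℝ) < c ^ ((m:ℝ)/2) := Real.rpow_pos_of_pos hc _
  have hD : (0:ℝ) < d ^ ((m:ℝ)/2) := Real.rpow_pos_of_pos hd _
  have hba : b/a/(c/a) = b/c := by field_simp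
  unfold G1 G2 Dprime Bcoef D19
  rw [hba, Real.div_rpow hb.le hc.le, Real.div_rpow hb.le hc.le, Real.div_rpow hb.le ha.le,
    Real.div_rpow hc.le ha.le, Real.div_rpow hd.le ha.le,
    rs1 m ha, rs2 m ha, rs1 m hb, rs2 m hb, rs3 m hb, rs1 m hc, rs2 m hc, rs3 m hc,
    rs1 m hd, rs2 m hd]
  set A := a ^ ((m:ℝ)/2)
  set Bb := b ^ ((m:ℝ)/2)
  set C := c ^ ((m:ℝ)/2)
  set D := d ^ ((m:ℝ)/2)
  field_simp
  ring

lemma lam_eq_F (t : ℝ) :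
    Lam m (fgen m a b c d) t
      = ((1 + (m:ℝ)) / t ^ (1 + (m:ℝ)/2)) * Fv m a b c d t - fgen m a b c d t := rfl

variable (ha : 0 < a) (hab : a < b) (hbc : b ≤ c) (hcd : c < d)
include ha hab hbc hcd

lemma lam_le_a {t : ℝ} (h0 : 0 ≤ t) (h : t ≤ a) : Lam m (fgen m a b c d) t = 0 := by
  rw [lam_eq_F m, F_le_a m ha hab hbc hcd h0 h]
  have h1 : ¬(a < t ∧ t ≤ b) := fun hh => absurd h (not_le.2 hh.1)
  have h2 : ¬(c < t ∧ t ≤ d) := fun hh => absurd (h.trans (hab.le.trans hbc)) (not_le.2 hh.1)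
  simp [fgen, h1, h2]

lemma lam_ab (hm : 1 ≤ m) {t : ℝ} (h1 : a < t) (h2 : t ≤ b) :
    Lam m (fgen m a b c d) t = 1 := by
  rw [lam_eq_F m, F_in_ab m ha hab hbc hcd h1.le h2]
  have hif : fgen m a b c d t = (2 + (m:ℝ)) / (m:ℝ) + Bcoef m a * t ^ ((m:ℝ)/2) := by
    simp [fgen, h1, h2]
  rw [hif]
  exact alg_ab m hm ha (ha.trans h1)

lemma lam_bc {t : ℝ} (h1 : b < t) (h2 : t ≤ c) :
    Lam m (fgen m a b c d) t
      = ((1 + (m:ℝ)) * (G1 m a b - G1 m a a)) / t ^ (1 + (m:ℝ)/2) := by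
  rw [lam_eq_F m, F_in_bc m ha hab hbc hcd h1.le h2]
  have hf1 : ¬(a < t ∧ t ≤ b) := fun hh => absurd h1 (not_lt.2 hh.2)
  have hf2 : ¬(c < t ∧ t ≤ d) := fun hh => absurd h2 (not_le.2 hh.1)
  simp only [fgen, if_neg hf1, if_neg hf2, sub_zero]
  rw [div_mul_eq_mul_div, mul_comm]

lemma lam_cd (hm : 1 ≤ m) {t : ℝ} (h1 : c < t) (h2 : t ≤ d) :
    Lam m (fgen m a b c d) t = -1 := by
  rw [lam_eq_F m, F_in_cd m ha hab hbc hcd h1.le h2]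
  have hf1 : ¬(a < t ∧ t ≤ b) := fun hh => absurd (hbc.trans_lt h1) (not_lt.2 hh.2)
  have hif : fgen m a b c d t = -(2 + (m:ℝ)) / (m:ℝ) + Dprime m a b c * t ^ ((m:ℝ)/2) := by
    simp [fgen, hf1, h1, h2]
  rw [hif]
  have hc0 : (0:ℝ) < c := ha.trans (hab.trans_le hbc)
  exact alg_cd m hm ha (ha.trans hab) hc0 (hc0.trans h1)

end LamVal

section LevelSet
variable (m : ℕ) {a b c d : ℝ}

lemma lam_gt_d (ha : 0 < a) (hab : a < b) (hbc : b ≤ c) (hcd : c < d) {t : ℝ} (h1 : d < t) :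
    Lam m (fgen m a b c d) t
      = ((1 + (m:ℝ)) * ((G1 m a b - G1 m a a) + (G2 m a b c d - G2 m a b c c)))
          / t ^ (1 + (m:ℝ)/2) := by
  rw [lam_eq_F m, F_ge_d m ha hab hbc hcd h1.le]
  have hf1 : ¬(a < t ∧ t ≤ b) := fun hh => absurd ((hbc.trans hcd.le).trans_lt h1)
    (not_lt.2 hh.2)
  have hf2 : ¬(c < t ∧ t ≤ d) := fun hh => absurd h1 (not_lt.2 hh.2)
  simp only [fgen, if_neg hf1, if_neg hf2, sub_zero]
  rw [div_mul_eq_mul_div, mul_comm]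

/-- Solving `t^(1+m/2) ≤ M`. -/
lemma le_pow_iff (hm : 1 ≤ m) {t M : ℝ} (ht : 0 ≤ t) (hM : 0 ≤ M) :
    t ^ (1 + (m:ℝ)/2) ≤ M ↔ t ≤ M ^ (2 / (2 + (m:ℝ))) := by
  have hμ : (1:ℝ) ≤ (m:ℝ) := by exact_mod_cast hm
  have he : (M ^ (2 / (2 + (m:ℝ)))) ^ (1 + (m:ℝ)/2) = M := by
    rw [← Real.rpow_mul hM, show 2 / (2 + (m:ℝ)) * (1 + (m:ℝ)/2) = 1 by field_simp,
      Real.rpow_one]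
  conv_lhs => rw [← he]
  exact Real.rpow_le_rpow_iff ht (Real.rpow_nonneg hM _) (by linarith)

lemma ibe_pos (hm : 1 ≤ m) (ha : 0 < a) (hab : a < b) :
    0 < -1 - (2 + (m:ℝ)) / (m:ℝ) + (2 * (1 + (m:ℝ)) / (m:ℝ)) * (b/a) ^ ((m:ℝ)/2) := by
  have hμ : (1:ℝ) ≤ (m:ℝ) := by exact_mod_cast hm
  have h1 : (1:ℝ) < (b/a) ^ ((m:ℝ)/2) :=
    (Real.one_lt_rpow_iff_of_pos (div_pos (ha.trans hab) ha)).2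
      (Or.inl ⟨(one_lt_div ha).2 hab, by linarith⟩)
  have : -1 - (2 + (m:ℝ)) / (m:ℝ) + (2 * (1 + (m:ℝ)) / (m:ℝ)) * (b/a) ^ ((m:ℝ)/2)
      = (2 * (1 + (m:ℝ)) / (m:ℝ)) * ((b/a) ^ ((m:ℝ)/2) - 1) := by
    field_simp; ring
  rw [this]
  have h2 : (0:ℝ) < 2 * (1 + (m:ℝ)) / (m:ℝ) := by positivity
  exact mul_pos h2 (by linarith)

/-- On `(b, c]`, `1 ≤ |Λ f|` iff `t` is below the threshold. -/
lemma iff_bc (hm : 1 ≤ m) (ha : 0 < a) (hab : a < b) (hbc : b ≤ c) (hcd : c < d) {t : ℝ}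
    (h1 : b < t) (h2 : t ≤ c) :
    1 ≤ |Lam m (fgen m a b c d) t| ↔
      t ≤ b * (-1 - (2 + (m:ℝ)) / (m:ℝ)
        + (2 * (1 + (m:ℝ)) / (m:ℝ)) * (b/a) ^ ((m:ℝ)/2)) ^ (2 / (2 + (m:ℝ))) := by
  have hb : 0 < b := ha.trans hab
  have ht : 0 < t := hb.trans h1
  have hI := ibe_pos m hm ha hab
  set ibe := -1 - (2 + (m:ℝ)) / (m:ℝ) + (2 * (1 + (m:ℝ)) / (m:ℝ)) * (b/a) ^ ((m:ℝ)/2) with hibe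
  have hq : (0:ℝ) < t ^ (1 + (m:ℝ)/2) := Real.rpow_pos_of_pos ht _
  have hbq : (0:ℝ) < b ^ (1 + (m:ℝ)/2) := Real.rpow_pos_of_pos hb _
  have hμ : (1:ℝ) ≤ (m:ℝ) := by exact_mod_cast hm
  have hsplit : (b ^ (1 + (m:ℝ)/2) * ibe) ^ (2 / (2 + (m:ℝ)))
      = b * ibe ^ (2 / (2 + (m:ℝ))) := by
    rw [Real.mul_rpow hbq.le hI.le, ← Real.rpow_mul hb.le,
      show (1 + (m:ℝ)/2) * (2 / (2 + (m:ℝ))) = 1 by field_simp, Real.rpow_one]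
  rw [lam_bc m ha hab hbc hcd h1 h2, Kb_eq m hm ha hb, ← hibe, abs_div, abs_neg,
    abs_of_pos (mul_pos hbq hI), abs_of_pos hq, le_div_iff₀ hq, one_mul,
    le_pow_iff m hm ht.le (mul_pos hbq hI).le, hsplit]

end LevelSet

section LevelSet2
variable (m : ℕ) {a b c d : ℝ}

lemma iff_gt_d (hm : 1 ≤ m) (ha : 0 < a) (hab : a < b) (hbc : b ≤ c) (hcd : c < d) {t : ℝ}
    (h1 : d < t) :
    1 ≤ |Lam m (fgen m a b c d) t| ↔
      t ≤ d * |(-1 - (2 + (m:ℝ)) / (m:ℝ)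
        + D19 m (b/a) (c/a) * (d/a) ^ ((m:ℝ)/2))| ^ (2 / (2 + (m:ℝ))) := by
  have hμ : (1:ℝ) ≤ (m:ℝ) := by exact_mod_cast hm
  have hb : 0 < b := ha.trans hab
  have hc : 0 < c := hb.trans_le hbc
  have hd : 0 < d := hc.trans hcd
  have ht : 0 < t := hd.trans h1
  set ide := -1 - (2 + (m:ℝ)) / (m:ℝ) + D19 m (b/a) (c/a) * (d/a) ^ ((m:ℝ)/2) with hide
  have hq : (0:ℝ) < t ^ (1 + (m:ℝ)/2) := Real.rpow_pos_of_pos ht _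
  have hdq : (0:ℝ) < d ^ (1 + (m:ℝ)/2) := Real.rpow_pos_of_pos hd _
  have hsplit : (d ^ (1 + (m:ℝ)/2) * |ide|) ^ (2 / (2 + (m:ℝ)))
      = d * |ide| ^ (2 / (2 + (m:ℝ))) := by
    rw [Real.mul_rpow hdq.le (abs_nonneg _), ← Real.rpow_mul hd.le,
      show (1 + (m:ℝ)/2) * (2 / (2 + (m:ℝ))) = 1 by field_simp, Real.rpow_one]
  rw [lam_gt_d m ha hab hbc hcd h1, Kd_eq m hm ha hb hc hd, ← hide, abs_div,
    abs_of_pos hq, abs_mul, abs_of_pos hdq, le_div_iff₀ hq, one_mul,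
    le_pow_iff m hm ht.le (by positivity), hsplit]

/-- The level set of `|Λ f| ≥ 1`. -/
lemma levelset (hm : 1 ≤ m) (ha : 0 < a) (hab : a < b) (hbc : b ≤ c) (hcd : c < d) :
    {t : ℝ | 0 ≤ t ∧ 1 ≤ |Lam m (fgen m a b c d) t|}
      = Set.Ioc a (min (max b (b * (-1 - (2 + (m:ℝ)) / (m:ℝ)
            + (2 * (1 + (m:ℝ)) / (m:ℝ)) * (b/a) ^ ((m:ℝ)/2)) ^ (2 / (2 + (m:ℝ))))) c)
        ∪ Set.Ioc c (max d (d * |(-1 - (2 + (m:ℝ)) / (m:ℝ)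
            + D19 m (b/a) (c/a) * (d/a) ^ ((m:ℝ)/2))| ^ (2 / (2 + (m:ℝ))))) := by
  have hb : 0 < b := ha.trans hab
  have hc : 0 < c := hb.trans_le hbc
  set τb := b * (-1 - (2 + (m:ℝ)) / (m:ℝ)
      + (2 * (1 + (m:ℝ)) / (m:ℝ)) * (b/a) ^ ((m:ℝ)/2)) ^ (2 / (2 + (m:ℝ))) with hτb
  set τd := d * |(-1 - (2 + (m:ℝ)) / (m:ℝ)
      + D19 m (b/a) (c/a) * (d/a) ^ ((m:ℝ)/2))| ^ (2 / (2 + (m:ℝ))) with hτd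
  ext t
  simp only [Set.mem_setOf_eq, Set.mem_union, Set.mem_Ioc]
  constructor
  · rintro ⟨ht0, hge⟩
    rcases le_or_gt t a with h|h
    · rw [lam_le_a m ha hab hbc hcd ht0 h] at hge; norm_num at hge
    rcases le_or_gt t b with h2|h2
    · exact Or.inl ⟨h, le_min (le_max_of_le_left h2) (h2.trans hbc)⟩
    rcases le_or_gt t c with h3|h3
    · have := (iff_bc m hm ha hab hbc hcd h2 h3).1 hge
      exact Or.inl ⟨h, le_min (le_max_of_le_right this) h3⟩
    rcases le_or_gt t d with h4|h4
    · exact Or.inr ⟨h3, h4.trans (le_max_left _ _)⟩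
    · exact Or.inr ⟨h3, le_max_of_le_right ((iff_gt_d m hm ha hab hbc hcd h4).1 hge)⟩
  · rintro (⟨h1, h2⟩ | ⟨h1, h2⟩)
    · refine ⟨(ha.trans h1).le, ?_⟩
      rcases le_or_gt t b with h3|h3
      · rw [lam_ab m ha hab hbc hcd hm h1 h3]; norm_num
      · have htc : t ≤ c := h2.trans (min_le_right _ _)
        have hτ : t ≤ max b τb := h2.trans (min_le_left _ _)
        have : t ≤ τb := by
          rcases le_max_iff.1 hτ with h|h
          · exact absurd h (not_le.2 h3)
          · exact h
        exact (iff_bc m hm ha hab hbc hcd h3 htc).2 this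
    · refine ⟨(hc.trans h1).le, ?_⟩
      rcases le_or_gt t d with h3|h3
      · rw [lam_cd m ha hab hbc hcd hm h1 h3]; norm_num
      · have : t ≤ τd := by
          rcases le_max_iff.1 h2 with h|h
          · exact absurd h (not_le.2 h3)
          · exact h
        exact (iff_gt_d m hm ha hab hbc hcd h3).2 this

end LevelSet2

section Numerator
variable (m : ℕ) {a b c d : ℝ}

lemma bhat_scale (ha : 0 < a) :
    a * bhat m (b/a) (c/a)
      = min (max b (b * (-1 - (2 + (m:ℝ)) / (m:ℝ)
          + (2 * (1 + (m:ℝ)) / (m:ℝ)) * (b/a) ^ ((m:ℝ)/2)) ^ (2 / (2 + (m:ℝ))))) c := by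
  unfold bhat
  rw [mul_min_of_nonneg _ _ ha.le, mul_max_of_nonneg _ _ ha.le, ← mul_assoc,
    mul_comm a (b/a), div_mul_cancel₀ b ha.ne', mul_comm a (c/a), div_mul_cancel₀ c ha.ne']

lemma dhat_scale (ha : 0 < a) :
    a * dhat m (b/a) (c/a) (d/a)
      = max d (d * |(-1 - (2 + (m:ℝ)) / (m:ℝ)
          + D19 m (b/a) (c/a) * (d/a) ^ ((m:ℝ)/2))| ^ (2 / (2 + (m:ℝ)))) := by
  unfold dhat
  rw [mul_max_of_nonneg _ _ ha.le, ← mul_assoc,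
    mul_comm a (d/a), div_mul_cancel₀ d ha.ne']

lemma meas_eq (hm : 1 ≤ m) (ha : 0 < a) (hab : a < b) (hbc : b ≤ c) (hcd : c < d) :
    (MeasureTheory.volume {t : ℝ | 0 ≤ t ∧ 1 ≤ |Lam m (fgen m a b c d) t|}).toReal
      = a * (bhat m (b/a) (c/a) - 1 + dhat m (b/a) (c/a) (d/a) - c/a) := by
  rw [levelset m hm ha hab hbc hcd]
  set τb := b * (-1 - (2 + (m:ℝ)) / (m:ℝ)
      + (2 * (1 + (m:ℝ)) / (m:ℝ)) * (b/a) ^ ((m:ℝ)/2)) ^ (2 / (2 + (m:ℝ))) with hτb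
  set τd := d * |(-1 - (2 + (m:ℝ)) / (m:ℝ)
      + D19 m (b/a) (c/a) * (d/a) ^ ((m:ℝ)/2))| ^ (2 / (2 + (m:ℝ))) with hτd
  set bh' := min (max b τb) c with hbh
  set dh' := max d τd with hdh
  have hb_bh : b ≤ bh' := le_min (le_max_left _ _) hbc
  have ha_bh : a ≤ bh' := (hab.le).trans hb_bh
  have hbh_c : bh' ≤ c := min_le_right _ _
  have hc_dh : c ≤ dh' := hcd.le.trans (le_max_left _ _)
  have hdisj : Disjoint (Set.Ioc a bh') (Set.Ioc c dh') := by
    rw [Set.Ioc_disjoint_Ioc]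
    exact (min_le_left _ _).trans (hbh_c.trans (le_max_right _ _))
  rw [MeasureTheory.measure_union hdisj measurableSet_Ioc, Real.volume_Ioc, Real.volume_Ioc,
    ENNReal.toReal_add ENNReal.ofReal_ne_top ENNReal.ofReal_ne_top,
    ENNReal.toReal_ofReal (by linarith), ENNReal.toReal_ofReal (by linarith)]
  have h1 : a * bhat m (b/a) (c/a) = bh' := bhat_scale m ha
  have h2 : a * dhat m (b/a) (c/a) (d/a) = dh' := dhat_scale m ha
  have h3 : a * (c/a) = c := by rw [mul_comm, div_mul_cancel₀ c ha.ne']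
  have : a * (bhat m (b/a) (c/a) - 1 + dhat m (b/a) (c/a) (d/a) - c/a)
      = a * bhat m (b/a) (c/a) - a * 1 + a * dhat m (b/a) (c/a) (d/a) - a * (c/a) := by ring
  rw [this, h1, h2, h3, mul_one]
  ring

end Numerator

section Denominator
open intervalIntegral
variable (m : ℕ) {a b c d : ℝ}

lemma seg_int2 (C B' : ℝ) {u v : ℝ} (hu : 0 < u) (huv : u ≤ v) :
    ∫ s in u..v, (C + B' * s ^ ((m:ℝ)/2))
      = (C * v + B' * v ^ (1 + (m:ℝ)/2) / (1 + (m:ℝ)/2))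
        - (C * u + B' * u ^ (1 + (m:ℝ)/2) / (1 + (m:ℝ)/2)) := by
  have hc2 : Continuous fun s : ℝ => B' * s ^ ((m:ℝ)/2) :=
    continuous_const.mul (Real.continuous_rpow_const (by positivity))
  rw [intervalIntegral.integral_add (intervalIntegrable_const) (hc2.intervalIntegrable u v),
    intervalIntegral.integral_const, intervalIntegral.integral_const_mul,
    integral_rpow (Or.inl (by have := Nat.cast_nonneg (α:=ℝ) m; linarith))]
  rw [show (m:ℝ)/2 + 1 = 1 + (m:ℝ)/2 by ring]
  simp only [smul_eq_mul]
  ring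

lemma P1_neg (hm : 1 ≤ m) (ha : 0 < a) {t : ℝ} (h : a ≤ t) : P1 m a t ≤ -1 := by
  have hμ : (1:ℝ) ≤ (m:ℝ) := by exact_mod_cast hm
  have hA : (0:ℝ) < a ^ ((m:ℝ)/2) := Real.rpow_pos_of_pos ha _
  have hB : Bcoef m a < 0 := by
    unfold Bcoef
    apply div_neg_of_neg_of_pos (by linarith) (by positivity)
  have hmono : a ^ ((m:ℝ)/2) ≤ t ^ ((m:ℝ)/2) := Real.rpow_le_rpow ha.le h (by positivity)
  have hBa : Bcoef m a * a ^ ((m:ℝ)/2) = -(2 * (1 + (m:ℝ))) / (m:ℝ) := by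
    unfold Bcoef; field_simp
  have h2 : Bcoef m a * t ^ ((m:ℝ)/2) ≤ Bcoef m a * a ^ ((m:ℝ)/2) :=
    mul_le_mul_of_nonpos_left hmono hB.le
  unfold P1
  rw [hBa] at h2
  have h3 : (2 + (m:ℝ)) / (m:ℝ) + -(2 * (1 + (m:ℝ))) / (m:ℝ) = -1 := by field_simp; ring
  linarith

lemma L_D (hm : 1 ≤ m) (ha : 0 < a) (hb : 0 < b) (hc : 0 < c) :
    D19 m (b/a) (c/a) = Dprime m a b c * a ^ ((m:ℝ)/2) := by
  have hμ : (1:ℝ) ≤ (m:ℝ) := by exact_mod_cast hm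
  have hA : (0:ℝ) < a ^ ((m:ℝ)/2) := Real.rpow_pos_of_pos ha _
  have hB : (0:ℝ) < b ^ ((m:ℝ)/2) := Real.rpow_pos_of_pos hb _
  have hC : (0:ℝ) < c ^ ((m:ℝ)/2) := Real.rpow_pos_of_pos hc _
  have hba : b/a/(c/a) = b/c := by field_simp
  unfold D19 Dprime Bcoef
  rw [hba, Real.div_rpow hb.le hc.le, Real.div_rpow hb.le hc.le, Real.div_rpow hb.le ha.le,
    Real.div_rpow hc.le ha.le, rs1 m hb, rs1 m hc, rs3 m hb, rs3 m hc]
  field_simp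
  ring

lemma denom_eq (hm : 1 ≤ m) (ha : 0 < a) (hab : a < b) (hbc : b ≤ c) (hcd : c < d) :
    ∫ t in Set.Ici (0:ℝ), |fgen m a b c d t|
      = a * ((m:ℝ) / (2 + (m:ℝ)) - ((2 + (m:ℝ)) / (m:ℝ)) * (b/a)
          + (4 * (1 + (m:ℝ)) / ((m:ℝ) * (2 + (m:ℝ)))) * (b/a) ^ (1 + (m:ℝ)/2)
          + ∫ t in (c/a)..(d/a), |(-(2 + (m:ℝ)) / (m:ℝ)
              + D19 m (b/a) (c/a) * t ^ ((m:ℝ)/2))|) := by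
  have hμ : (1:ℝ) ≤ (m:ℝ) := by exact_mod_cast hm
  have hb : 0 < b := ha.trans hab
  have hc : 0 < c := hb.trans_le hbc
  have hd : 0 < d := hc.trans hcd
  have hA : (0:ℝ) < a ^ ((m:ℝ)/2) := Real.rpow_pos_of_pos ha _
  -- pointwise decomposition of |fgen|
  have habs : (fun t => |fgen m a b c d t|)
      = fun t => (Set.Ioc a b).indicator (fun t => |P1 m a t|) t
          + (Set.Ioc c d).indicator (fun t => |P2 m a b c t|) t := by
    funext t
    rw [show fgen m a b c d t = _ from congrFun (fgen_eq_indicator m a b c d hbc) t]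
    by_cases h1 : t ∈ Set.Ioc a b <;> by_cases h2 : t ∈ Set.Ioc c d
    · exact absurd (h2.1) (not_lt.2 (h1.2.trans hbc))
    all_goals simp [h1, h2, Set.indicator_of_mem, Set.indicator_of_notMem, abs_of_nonneg]
  have cont1 : Continuous fun t : ℝ => |P1 m a t| :=
    (continuous_const.add (continuous_const.mul
      (Real.continuous_rpow_const (by positivity)))).abs
  have cont2 : Continuous fun t : ℝ => |P2 m a b c t| :=
    (continuous_const.add (continuous_const.mul
      (Real.continuous_rpow_const (by positivity)))).abs
  have int1 : MeasureTheory.Integrable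
      ((Set.Ioc a b).indicator fun t => |P1 m a t|) MeasureTheory.volume := by
    rw [MeasureTheory.integrable_indicator_iff measurableSet_Ioc]
    exact (cont1.continuousOn.integrableOn_Icc).mono_set Set.Ioc_subset_Icc_self
  have int2 : MeasureTheory.Integrable
      ((Set.Ioc c d).indicator fun t => |P2 m a b c t|) MeasureTheory.volume := by
    rw [MeasureTheory.integrable_indicator_iff measurableSet_Ioc]
    exact (cont2.continuousOn.integrableOn_Icc).mono_set Set.Ioc_subset_Icc_self
  rw [show (fun t => |fgen m a b c d t|) = _ from habs]
  rw [MeasureTheory.integral_add (int1.integrableOn) (int2.integrableOn)]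
  rw [MeasureTheory.setIntegral_indicator measurableSet_Ioc,
    MeasureTheory.setIntegral_indicator measurableSet_Ioc,
    show Set.Ici (0:ℝ) ∩ Set.Ioc a b = Set.Ioc a b from
      Set.inter_eq_self_of_subset_right (fun x hx => (ha.trans hx.1).le),
    show Set.Ici (0:ℝ) ∩ Set.Ioc c d = Set.Ioc c d from
      Set.inter_eq_self_of_subset_right (fun x hx => (hc.trans hx.1).le),
    ← intervalIntegral.integral_of_le hab.le, ← intervalIntegral.integral_of_le hcd.le]
  -- first piece
  have e1 : ∫ t in a..b, |P1 m a t|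
      = ∫ t in a..b, (-((2 + (m:ℝ)) / (m:ℝ)) + (-Bcoef m a) * t ^ ((m:ℝ)/2)) := by
    apply intervalIntegral.integral_congr_ae
    filter_upwards with t ht
    rw [Set.uIoc_of_le hab.le] at ht
    have := P1_neg m hm ha ht.1.le
    rw [abs_of_neg (by linarith)]
    unfold P1; ring
  have e2 : ∫ t in a..b, |P1 m a t|
      = a * ((m:ℝ) / (2 + (m:ℝ)) - ((2 + (m:ℝ)) / (m:ℝ)) * (b/a)
          + (4 * (1 + (m:ℝ)) / ((m:ℝ) * (2 + (m:ℝ)))) * (b/a) ^ (1 + (m:ℝ)/2)) := by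
    rw [e1, seg_int2 m _ _ ha hab.le]
    unfold Bcoef
    rw [Real.div_rpow hb.le ha.le, rs1 m ha, rs1 m hb]
    set A := a ^ ((m:ℝ)/2)
    set Bb := b ^ ((m:ℝ)/2)
    field_simp
    ring
  -- second piece: substitution t = a s
  have e3 : ∫ t in c..d, |P2 m a b c t|
      = a * ∫ t in (c/a)..(d/a), |(-(2 + (m:ℝ)) / (m:ℝ)
          + D19 m (b/a) (c/a) * t ^ ((m:ℝ)/2))| := by
    have hgcong : ∫ t in c..d, |P2 m a b c t|
        = ∫ t in c..d, (fun s => |(-(2 + (m:ℝ)) / (m:ℝ)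
            + D19 m (b/a) (c/a) * s ^ ((m:ℝ)/2))|) (t / a) := by
      apply intervalIntegral.integral_congr_ae
      filter_upwards with t ht
      rw [Set.uIoc_of_le hcd.le] at ht
      have ht0 : 0 < t := hc.trans ht.1
      show |P2 m a b c t| = _
      rw [L_D m hm ha hb hc, Real.div_rpow ht0.le ha.le]
      congr 1
      unfold P2
      have hA' : a ^ ((m:ℝ)/2) ≠ 0 := hA.ne'
      field_simp
    rw [hgcong, intervalIntegral.integral_comp_div (f := fun s => |(-(2 + (m:ℝ)) / (m:ℝ)
        + D19 m (b/a) (c/a) * s ^ ((m:ℝ)/2))|) ha.ne', smul_eq_mul]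
  rw [e2, e3]
  ring

end Denominator

/-- The restricted weak-type constant of `Λ_m` over the full class `F_m` equals the explicit
supremum over parameters `1 < b ≤ c < d`. -/
theorem stmt_19 (m : ℕ) (hm : 1 ≤ m) :
    sSup {r : ℝ | ∃ a b c d : ℝ, 0 < a ∧ a < b ∧ b ≤ c ∧ c < d ∧
        r = (MeasureTheory.volume {t : ℝ | 0 ≤ t ∧ 1 ≤ |Lam m (fgen m a b c d) t|}).toReal /
          ∫ t in Set.Ici (0 : ℝ), |fgen m a b c d t|} =
    sSup {r : ℝ | ∃ b c d : ℝ, 1 < b ∧ b ≤ c ∧ c < d ∧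
        r = (bhat m b c - 1 + dhat m b c d - c) /
          ((m : ℝ) / (2 + (m : ℝ)) - ((2 + (m : ℝ)) / (m : ℝ)) * b
            + (4 * (1 + (m : ℝ)) / ((m : ℝ) * (2 + (m : ℝ)))) * b ^ (1 + (m : ℝ) / 2)
            + ∫ t in c..d, |(-(2 + (m : ℝ)) / (m : ℝ) + D19 m b c * t ^ ((m : ℝ) / 2))|)} := by
  apply congrArg
  ext r
  simp only [Set.mem_setOf_eq]
  constructor
  · rintro ⟨a, b, c, d, ha, hab, hbc, hcd, hr⟩
    refine ⟨b/a, c/a, d/a, (one_lt_div ha).2 hab, by gcongr, by gcongr, ?_⟩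
    rw [meas_eq m hm ha hab hbc hcd, denom_eq m hm ha hab hbc hcd,
      mul_div_mul_left _ _ ha.ne'] at hr
    exact hr
  · rintro ⟨b, c, d, hb, hbc, hcd, hr⟩
    refine ⟨1, b, c, d, one_pos, hb, hbc, hcd, ?_⟩
    rw [meas_eq m hm one_pos hb hbc hcd, denom_eq m hm one_pos hb hbc hcd,
      mul_div_mul_left _ _ one_ne_zero]
    simpa only [div_one] using hr
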